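/- arXiv:2004.11782 — 7 statements merged into one kernel-verified Lean document; each statement's English description precedes it below -/
import Mathlib

section
/- Let n > 0 be a real number (the number of modes), and let E and M be real numbers with M ≥ 1 such that E ≤ (n/2)·g((M−1)/2), where g(x) = (x+1)·log(x+1) − x·log(x). If E ≥ (3/2)·(n/2) = 3n/4, then M ≥ 1 + 2·exp(2E/n − 2). -/
/-- `g x = (x+1) log(x+1) - x log x`, the von Neumann entropy of a single-mode
thermal state with mean photon number `x` (with the convention `0 * log 0 = 0`,
which holds since `Real.log 0 = 0`). -/
noncomputable def g (x : ℝ) : ℝ := (x + 1) * Real.log (x + 1) - x * Real.log x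

lemma exp_half_le : Real.exp (1/2) ≤ Real.exp 1 - 1 := by
  have h : Real.exp (1/2) * Real.exp (1/2) = Real.exp 1 := by
    rw [← Real.exp_add]; norm_num
  have he := Real.exp_one_gt_d9
  nlinarith [Real.exp_pos (1/2), sq_nonneg (Real.exp (1/2) - 1.6487)]

lemma exp_step {t : ℝ} (ht : 3/2 ≤ t) : Real.exp (t - 2) + 1 ≤ Real.exp (t - 1) := by
  have h1 : Real.exp (t - 1) = Real.exp (t - 2) * Real.exp 1 := by
    rw [← Real.exp_add]; ring_nf
  have h2 : Real.exp (-(1/2) : ℝ) ≤ Real.exp (t - 2) := Real.exp_le_exp.2 (by linarith)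
  have h3 : Real.exp (-(1/2) : ℝ) * Real.exp (1/2) = 1 := by
    rw [← Real.exp_add]; norm_num
  have h4 : (1 : ℝ) ≤ Real.exp (-(1/2) : ℝ) * (Real.exp 1 - 1) := by
    nlinarith [exp_half_le, Real.exp_pos (-(1/2) : ℝ)]
  nlinarith [Real.exp_pos (t - 2), Real.exp_pos (-(1/2) : ℝ), Real.exp_one_gt_d9]

/-- Corollary 1 of the paper, stated as an inequality between real numbers:
if `M ≥ 1`, `E ≤ (n/2) g((M-1)/2)` and `E ≥ (3/2)(n/2)`, then
`M ≥ 1 + 2 exp(2E/n - 2)`. -/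
theorem entanglement_implies_exponential_nonclassicality
    (n E M : ℝ) (hn : 0 < n) (hM : 1 ≤ M)
    (hEM : E ≤ n / 2 * g ((M - 1) / 2))
    (hE : (3 / 2) * (n / 2) ≤ E) :
    1 + 2 * Real.exp (2 * E / n - 2) ≤ M := by
  set x := (M - 1) / 2 with hxdef
  have hx0 : 0 ≤ x := by rw [hxdef]; linarith
  have hE0 : 0 < E := lt_of_lt_of_le (by nlinarith) hE
  rcases eq_or_lt_of_le hx0 with h | hxpos
  · exfalso
    have hg0 : g x = 0 := by rw [← h]; simp [g]
    rw [hg0] at hEM; nlinarith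
  · have hx1 : (0:ℝ) < x + 1 := by linarith
    have hlog : Real.log ((x+1)/x) ≤ (x+1)/x - 1 :=
      Real.log_le_sub_one_of_pos (by positivity)
    have hdiv : (x+1)/x - 1 = 1/x := by field_simp; ring
    have hlogdiv : Real.log ((x+1)/x) = Real.log (x+1) - Real.log x :=
      Real.log_div (by linarith) (ne_of_gt hxpos)
    have hg : g x ≤ Real.log (x+1) + 1 := by
      have hmul : x * Real.log ((x+1)/x) ≤ 1 := by
        calc x * Real.log ((x+1)/x) ≤ x * (1/x) := by
              apply mul_le_mul_of_nonneg_left _ hx0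
              rw [← hdiv]; exact hlog
          _ = 1 := by field_simp
      have : g x = Real.log (x+1) + x * (Real.log (x+1) - Real.log x) := by
        unfold g; ring
      rw [this, ← hlogdiv]; linarith
    have ht32 : 3/2 ≤ 2 * E / n := by
      rw [le_div_iff₀ hn]; nlinarith
    have h2 : 2 * E / n ≤ Real.log (x+1) + 1 := by
      rw [div_le_iff₀ hn]; nlinarith
    have ht : 2 * E / n - 1 ≤ Real.log (x + 1) := by linarith
    have hexp : Real.exp (2 * E / n - 1) ≤ x + 1 := by
      calc Real.exp (2 * E / n - 1) ≤ Real.exp (Real.log (x+1)) := Real.exp_le_exp.2 ht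
        _ = x + 1 := Real.exp_log hx1
    have hstep := exp_step ht32
    have hMx : M = 2 * x + 1 := by rw [hxdef]; ring
    rw [hMx]; linarith
end

section
/- For all real numbers a > 0, b > 0 and N > 0, there exists a unique real number t with 0 < t < N such that a·g(t/a) = b·g((N−t)/b), where g(x) = (x+1)·log(x+1) − x·log(x). -/
lemma g_continuous : Continuous g := by
  have h := Real.continuous_mul_log
  exact (h.comp (continuous_id.add continuous_const)).sub h

lemma g_zero : g 0 = 0 := by simp [g]

lemma g_hasDerivAt {x : ℝ} (hx : 0 < x) :
    HasDerivAt g (Real.log (x + 1) - Real.log x) x := by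
  have h1 : HasDerivAt (fun y : ℝ => (y + 1) * Real.log (y + 1))
      (Real.log (x + 1) + 1) x := by
    have := (Real.hasDerivAt_mul_log (x := x + 1) (by linarith)).comp x
      ((hasDerivAt_id x).add_const 1)
    simpa [Function.comp_def] using this
  have h2 : HasDerivAt (fun y : ℝ => y * Real.log y) (Real.log x + 1) x :=
    Real.hasDerivAt_mul_log hx.ne'
  have h3 := h1.sub h2
  have : Real.log (x + 1) + 1 - (Real.log x + 1) = Real.log (x + 1) - Real.log x := by ring
  rw [this] at h3
  exact h3

lemma g_strictMonoOn : StrictMonoOn g (Set.Ici 0) := by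
  apply strictMonoOn_of_deriv_pos (convex_Ici 0) g_continuous.continuousOn
  intro x hx
  rw [interior_Ici] at hx
  rw [(g_hasDerivAt hx).deriv]
  have : Real.log x < Real.log (x + 1) := Real.log_lt_log hx (by linarith)
  linarith

lemma g_pos {x : ℝ} (hx : 0 < x) : 0 < g x := by
  have := g_strictMonoOn (Set.self_mem_Ici) (Set.mem_Ici.mpr hx.le) hx
  simpa [g_zero] using this

/-- Eq. (4) of the paper has a unique solution: for `a, b, N > 0` there is a
unique `t ∈ (0, N)` with `a g(t/a) = b g((N-t)/b)`. -/
theorem existsUnique_NAstar (a b N : ℝ) (ha : 0 < a) (hb : 0 < b) (hN : 0 < N) :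
    ∃! t : ℝ, 0 < t ∧ t < N ∧ a * g (t / a) = b * g ((N - t) / b) := by
  set F : ℝ → ℝ := fun t => a * g (t / a) - b * g ((N - t) / b) with hF
  have hFmono : StrictMonoOn F (Set.Icc 0 N) := by
    intro s hs t ht hst
    have h1 : g (s / a) < g (t / a) := by
      apply g_strictMonoOn (Set.mem_Ici.mpr (by have := hs.1; positivity))
        (Set.mem_Ici.mpr (by have := le_trans hs.1 hst.le; positivity))
      exact div_lt_div_of_pos_right hst ha
    have h2 : g ((N - t) / b) < g ((N - s) / b) := by
      apply g_strictMonoOn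
        (Set.mem_Ici.mpr (by have := ht.2; exact div_nonneg (by linarith) hb.le))
        (Set.mem_Ici.mpr (by exact div_nonneg (by linarith [ht.2]) hb.le))
      apply div_lt_div_of_pos_right (by linarith) hb
    have h1' := mul_lt_mul_of_pos_left h1 ha
    have h2' := mul_lt_mul_of_pos_left h2 hb
    simp only [hF]
    linarith
  have hFcont : Continuous F := by
    apply Continuous.sub
    · exact continuous_const.mul (g_continuous.comp (continuous_id.div_const a))
    · exact continuous_const.mul
        (g_continuous.comp ((continuous_const.sub continuous_id).div_const b))
  have hF0 : F 0 < 0 := by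
    have : 0 < g (N / b) := g_pos (by positivity)
    simp only [hF, zero_div, g_zero, sub_zero, mul_zero, zero_sub, neg_neg]
    nlinarith
  have hFN : 0 < F N := by
    have : 0 < g (N / a) := g_pos (by positivity)
    simp only [hF, sub_self, zero_div, g_zero, mul_zero, sub_zero]
    nlinarith
  -- existence via IVT
  have hsub := intermediate_value_Icc hN.le hFcont.continuousOn
  have h0mem : (0 : ℝ) ∈ Set.Icc (F 0) (F N) := ⟨hF0.le, hFN.le⟩
  obtain ⟨t, htmem, htF⟩ := hsub h0mem
  have ht0 : 0 < t := by
    rcases eq_or_lt_of_le htmem.1 with h | h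
    · exfalso; rw [← h] at htF; rw [htF] at hF0; exact lt_irrefl 0 hF0
    · exact h
  have htN : t < N := by
    rcases eq_or_lt_of_le htmem.2 with h | h
    · exfalso; rw [h] at htF; rw [htF] at hFN; exact lt_irrefl 0 hFN
    · exact h
  refine ⟨t, ⟨ht0, htN, ?_⟩, ?_⟩
  · have : a * g (t / a) - b * g ((N - t) / b) = 0 := htF
    linarith
  · rintro s ⟨hs0, hsN, hseq⟩
    have hsF : F s = 0 := by simp only [hF]; linarith
    exact hFmono.injOn ⟨hs0.le, hsN.le⟩ ⟨ht0.le, htN.le⟩ (by rw [hsF, htF])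
end

section
/- Let a > 0 and b > 0 be real numbers, and let t : ℝ → ℝ satisfy, for every N > 0, 0 < t(N) < N and a·g(t(N)/a) = b·g((N−t(N))/b), where g(x) = (x+1)·log(x+1) − x·log(x). Fix N₀ > 0 and suppose t has derivative t' at N₀. Writing L_A = log(1 + a/t(N₀)) and L_B = log(1 + b/(N₀ − t(N₀))), one has t' = L_B/(L_A + L_B); moreover the function F(N) = a·g(t(N)/a) has derivative F'(N₀) = 1/(1/L_A + 1/L_B) at N₀. -/
lemma hasDerivAt_g {x : ℝ} (hx : 0 < x) :
    HasDerivAt g (Real.log (1 + 1 / x)) x := by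
  have hx1 : (0:ℝ) < x + 1 := by linarith
  have h1 : HasDerivAt (fun y : ℝ => (y + 1) * Real.log (y + 1))
      (Real.log (x + 1) + 1) x := by
    have hlog : HasDerivAt (fun y : ℝ => Real.log (y + 1)) ((x + 1)⁻¹ * 1) x :=
      by have := (Real.hasDerivAt_log hx1.ne').comp x ((hasDerivAt_id x).add_const 1); exact this
    have := ((hasDerivAt_id x).add_const 1).mul hlog
    refine this.congr_deriv ?_
    simp only [id]
    field_simp
  have h2 : HasDerivAt (fun y : ℝ => y * Real.log y) (Real.log x + 1) x := by
    have := (hasDerivAt_id x).mul (Real.hasDerivAt_log hx.ne')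
    refine this.congr_deriv ?_
    simp only [id]
    field_simp
  have h3 := h1.sub h2
  have hfun : g = fun y : ℝ => (y + 1) * Real.log (y + 1) - y * Real.log y := rfl
  rw [hfun]
  refine h3.congr_deriv ?_
  have h4 : 1 + 1 / x = (x + 1) / x := by field_simp
  rw [h4, Real.log_div hx1.ne' hx.ne']
  ring

/-- Derivative formulas from the proof of Theorem 1': with
`L_A = log(1 + a/t(N₀))` and `L_B = log(1 + b/(N₀ - t(N₀)))`, one has
`t'(N₀) = L_B/(L_A + L_B)` and `F'(N₀) = 1/(1/L_A + 1/L_B)` for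
`F(N) = a g(t(N)/a)`. -/
theorem NAstar_deriv (a b : ℝ) (ha : 0 < a) (hb : 0 < b) (t : ℝ → ℝ)
    (ht : ∀ N : ℝ, 0 < N →
      0 < t N ∧ t N < N ∧ a * g (t N / a) = b * g ((N - t N) / b))
    (N₀ : ℝ) (hN₀ : 0 < N₀) (t' : ℝ) (hderiv : HasDerivAt t t' N₀) :
    t' = Real.log (1 + b / (N₀ - t N₀)) /
        (Real.log (1 + a / t N₀) + Real.log (1 + b / (N₀ - t N₀))) ∧
    HasDerivAt (fun N => a * g (t N / a))
      (1 / (1 / Real.log (1 + a / t N₀) + 1 / Real.log (1 + b / (N₀ - t N₀))))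
      N₀ := by
  obtain ⟨hu, hlt, -⟩ := ht N₀ hN₀
  have hv : 0 < N₀ - t N₀ := by linarith
  set u := t N₀ with hu'
  set LA := Real.log (1 + a / u) with hLA
  set LB := Real.log (1 + b / (N₀ - u)) with hLB
  have hLApos : 0 < LA := Real.log_pos (by nlinarith [div_pos ha hu])
  have hLBpos : 0 < LB := Real.log_pos (by nlinarith [div_pos hb hv])
  -- derivative of F
  have hF : HasDerivAt (fun N => a * g (t N / a)) (LA * t') N₀ := by
    have h1 : HasDerivAt (fun N => t N / a) (t' / a) N₀ := hderiv.div_const a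
    have h2 : HasDerivAt g (Real.log (1 + 1 / (u / a))) (u / a) :=
      hasDerivAt_g (by positivity)
    have h3 := (h2.comp N₀ h1).const_mul a
    refine h3.congr_deriv ?_
    have h4 : 1 + 1 / (u / a) = 1 + a / u := by
      rw [one_div_div]
    rw [h4, ← hLA]
    field_simp
  -- derivative of G
  have hG : HasDerivAt (fun N => b * g ((N - t N) / b)) (LB * (1 - t')) N₀ := by
    have h1 : HasDerivAt (fun N => (N - t N) / b) ((1 - t') / b) N₀ :=
      ((hasDerivAt_id N₀).sub hderiv).div_const b
    have h2 : HasDerivAt g (Real.log (1 + 1 / ((N₀ - u) / b))) ((N₀ - u) / b) :=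
      hasDerivAt_g (by positivity)
    have h3 := (h2.comp N₀ h1).const_mul b
    refine h3.congr_deriv ?_
    have h4 : 1 + 1 / ((N₀ - u) / b) = 1 + b / (N₀ - u) := by
      rw [one_div_div]
    rw [h4, ← hLB]
    field_simp
  -- F - G vanishes near N₀
  have hzero : HasDerivAt (fun N => a * g (t N / a) - b * g ((N - t N) / b))
      (0 : ℝ) N₀ := by
    have hev : (fun N => a * g (t N / a) - b * g ((N - t N) / b)) =ᶠ[nhds N₀]
        (fun _ => (0 : ℝ)) := by
      filter_upwards [eventually_gt_nhds hN₀] with N hN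
      have := (ht N hN).2.2
      linarith
    exact (hasDerivAt_const N₀ (0:ℝ)).congr_of_eventuallyEq hev
  have heq : LA * t' - LB * (1 - t') = 0 := (hF.sub hG).unique hzero
  have hsum : LA + LB ≠ 0 := by positivity
  have ht' : t' = LB / (LA + LB) := by
    field_simp
    linarith
  refine ⟨ht', ?_⟩
  have hval : LA * t' = 1 / (1 / LA + 1 / LB) := by
    rw [ht']
    field_simp
    ring
  rw [← hval]
  exact hF
end

section
/- Let m ≥ 1 be a natural number, let ν : Fin m → ℝ satisfy ν(i) > 0 for all i, and let n and c be positive real numbers with m ≤ n and (1/n)·∑_{i} 1/ν(i) ≤ c. Then ∑_{i} log(1/ν(i)) ≤ m·( log(c) + log(n/m) ). -/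
/-- Analytic content of Theorem 2: if `ν i > 0`, `m ≤ n` and
`(1/n) ∑ 1/ν i ≤ c`, then `∑ log(1/ν i) ≤ m (log c + log(n/m))`. -/
theorem logneg_bound (m : ℕ) (hm : 1 ≤ m) (ν : Fin m → ℝ)
    (hν : ∀ i, 0 < ν i) (n c : ℝ) (hn : 0 < n) (hc : 0 < c)
    (hmn : (m : ℝ) ≤ n)
    (hsum : (1 / n) * ∑ i, 1 / ν i ≤ c) :
    ∑ i, Real.log (1 / ν i) ≤ m * (Real.log c + Real.log (n / m)) := by
  have hm' : (0 : ℝ) < m := by exact_mod_cast hm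
  -- Jensen: ∑ (1/m) • log (1/ν i) ≤ log (∑ (1/m) • (1/ν i))
  have hjensen := ((strictConcaveOn_log_Ioi.concaveOn)).le_map_sum
    (t := Finset.univ) (w := fun _ : Fin m => 1 / (m : ℝ)) (p := fun i => 1 / ν i)
    (fun i _ => by positivity)
    (by simp [Finset.sum_const, Finset.card_univ]; field_simp)
    (fun i _ => Set.mem_Ioi.mpr (by have := hν i; positivity))
  simp only [smul_eq_mul, ← Finset.mul_sum] at hjensen
  have hsumpos : (0 : ℝ) < ∑ i, 1 / ν i := by
    haveI : Nonempty (Fin m) := ⟨⟨0, hm⟩⟩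
    apply Finset.sum_pos (fun i _ => by have := hν i; positivity)
    exact Finset.univ_nonempty
  have h2 : Real.log ((1 / (m : ℝ)) * ∑ i, 1 / ν i) ≤ Real.log (c * (n / m)) := by
    apply Real.log_le_log (by positivity)
    have : (1 / (m : ℝ)) * ∑ i, 1 / ν i = (n / m) * ((1 / n) * ∑ i, 1 / ν i) := by
      field_simp
    rw [this, mul_comm c (n / m)]
    exact mul_le_mul_of_nonneg_left hsum (by positivity)
  have h3 : (1 / (m : ℝ)) * ∑ i, Real.log (1 / ν i) ≤ Real.log c + Real.log (n / m) := by
    calc (1 / (m : ℝ)) * ∑ i, Real.log (1 / ν i) ≤ Real.log ((1 / (m : ℝ)) * ∑ i, 1 / ν i) := hjensen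
      _ ≤ Real.log (c * (n / m)) := h2
      _ = Real.log c + Real.log (n / m) := Real.log_mul (ne_of_gt hc) (by positivity)
  have := mul_le_mul_of_nonneg_left h3 (le_of_lt hm')
  rw [← mul_assoc] at this
  field_simp at this
  linarith [this]
end

section
/- Let n ≥ 1 be a real number, m a natural number, and E ≥ 0 and c > 0 real numbers such that either m = 0 and E = 0, or 1 ≤ m, m ≤ n, and E ≤ m·( log(c) + log(n/m) ). If E > n/e (where e = exp 1), then log(c) ≥ E/n − 1/e. -/
/-- Corollary 2, Eq. (17): with `E` playing the role of the logarithmic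
negativity, `c` of the squared quadrature coherence scale, and `m` of `n₋`,
if `E > n/e` then `log c ≥ E/n - 1/e`. -/
theorem QCS_lower_bound (n : ℝ) (hn : 1 ≤ n) (m : ℕ) (E c : ℝ)
    (hE : 0 ≤ E) (hc : 0 < c)
    (h : (m = 0 ∧ E = 0) ∨
      (1 ≤ m ∧ (m : ℝ) ≤ n ∧ E ≤ m * (Real.log c + Real.log (n / m))))
    (hEn : E > n / Real.exp 1) :
    Real.log c ≥ E / n - 1 / Real.exp 1 := by
  have he : (0:ℝ) < Real.exp 1 := Real.exp_pos 1
  have hn0 : (0:ℝ) < n := lt_of_lt_of_le one_pos hn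
  rcases h with ⟨_, hE0⟩ | ⟨hm1, hmn, hEle⟩
  · exfalso
    have : 0 < n / Real.exp 1 := by positivity
    linarith
  · set M : ℝ := (m : ℝ) with hMdef
    have hM1 : (1:ℝ) ≤ M := by rw [hMdef]; exact_mod_cast hm1
    have hM0 : (0:ℝ) < M := lt_of_lt_of_le one_pos hM1
    set L : ℝ := Real.log c with hLdef
    -- log (n/M) ≤ n/(M*e)
    have hlogt : Real.log (n / M) ≤ n / (M * Real.exp 1) := by
      have hx : (0:ℝ) < n / M / Real.exp 1 := by positivity
      have h1 := Real.log_le_sub_one_of_pos hx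
      rw [Real.log_div (by positivity : (0:ℝ) < n / M).ne' he.ne', Real.log_exp] at h1
      have h2 : n / M / Real.exp 1 = n / (M * Real.exp 1) := by
        rw [div_div]
      linarith
    -- n < E * e
    have hEe : n < E * Real.exp 1 := (div_lt_iff₀ he).mp hEn
    -- E ≤ M*(L + n/(M*e)) = M*L + n/e
    have hEle2 : E ≤ M * L + n / Real.exp 1 := by
      have h3 : M * (L + Real.log (n / M)) ≤ M * (L + n / (M * Real.exp 1)) := by
        apply mul_le_mul_of_nonneg_left _ hM0.le
        linarith
      have h4 : M * (L + n / (M * Real.exp 1)) = M * L + n / Real.exp 1 := by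
        field_simp
      linarith
    -- L > 0
    have hLpos : 0 < L := by
      have h5 : n / Real.exp 1 < E := hEn
      nlinarith
    -- finish: E ≤ (L + 1/e) * n
    rw [ge_iff_le, sub_le_iff_le_add, div_le_iff₀ hn0]
    have h6 : M * L ≤ n * L := mul_le_mul_of_nonneg_right hmn hLpos.le
    have h7 : (1 / Real.exp 1) * n = n / Real.exp 1 := by ring
    nlinarith
end

section
/- Let n ≥ 1 be a real number, m a natural number, and E ≥ 0 and c > 0 real numbers such that either m = 0 and E = 0, or 1 ≤ m, m ≤ n, and E ≤ m·( log(c) + log(n/m) ). If c < exp(−n/e) (where e = exp 1), then E = 0. -/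
lemma log_le_div_e (x : ℝ) (hx : 0 < x) : Real.log x ≤ x / Real.exp 1 := by
  have he : (0:ℝ) < Real.exp 1 := Real.exp_pos 1
  have h1 : Real.log (x / Real.exp 1) ≤ x / Real.exp 1 - 1 :=
    Real.log_le_sub_one_of_pos (by positivity)
  have h2 : Real.log (x / Real.exp 1) = Real.log x - 1 := by
    rw [Real.log_div hx.ne' he.ne', Real.log_exp]
  linarith

/-- Corollary 2, Eq. (18): with `E` playing the role of the logarithmic
negativity, `c` of the squared quadrature coherence scale, and `m` of `n₋`,
if `c < exp(-n/e)` then `E = 0`. -/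
theorem small_QCS_implies_separable (n : ℝ) (hn : 1 ≤ n) (m : ℕ) (E c : ℝ)
    (hE : 0 ≤ E) (hc : 0 < c)
    (h : (m = 0 ∧ E = 0) ∨
      (1 ≤ m ∧ (m : ℝ) ≤ n ∧ E ≤ m * (Real.log c + Real.log (n / m))))
    (hsmall : c < Real.exp (-(n / Real.exp 1))) :
    E = 0 := by
  rcases h with ⟨_, hE0⟩ | ⟨hm1, hmn, hEle⟩
  · exact hE0
  · have hmpos : (0:ℝ) < m := by exact_mod_cast Nat.pos_of_ne_zero (by omega)
    have hnpos : (0:ℝ) < n := by linarith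
    have he : (0:ℝ) < Real.exp 1 := Real.exp_pos 1
    have hlogc : Real.log c < -(n / Real.exp 1) := by
      have := Real.log_lt_log hc hsmall
      rwa [Real.log_exp] at this
    have hlog2 : Real.log (n / m) ≤ (n / m) / Real.exp 1 :=
      log_le_div_e _ (by positivity)
    have hkey : (m:ℝ) * (Real.log c + Real.log (n / m)) < 0 := by
      have h1 : Real.log c + Real.log (n / m) < -(n / Real.exp 1) + (n / m) / Real.exp 1 := by
        linarith
      have heq : (m:ℝ) * (-(n / Real.exp 1) + (n / m) / Real.exp 1)
          = -(n / Real.exp 1) * ((m:ℝ) - 1) := by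
        field_simp
        ring
      have h2 : (m:ℝ) * (-(n / Real.exp 1) + (n / m) / Real.exp 1) ≤ 0 := by
        rw [heq]
        have hm1' : (1:ℝ) ≤ m := by exact_mod_cast hm1
        nlinarith [div_pos hnpos he]
      nlinarith
    linarith
end

section
/- Let ι be a finite type, let d : ι → ℝ satisfy d(i) > 0 for all i, let D be the complex diagonal matrix with diagonal entries d(i), and let D^{1/2} be the complex diagonal matrix with diagonal entries √(d(i)). Then for a matrix C : Matrix ι ι ℂ, the following are equivalent: (1) Cᴴ·C = D and C·Cᴴ = D; (2) there exists a unitary matrix U (i.e. U ∈ Matrix.unitaryGroup ι ℂ) with U·D = D·U and C = U·D^{1/2}. -/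
open Matrix in
/-- Appendix A lemma: for a positive diagonal matrix `D` with entries `d i` and
`D^{1/2}` the diagonal matrix with entries `√(d i)`, a matrix `C` satisfies
`Cᴴ C = D` and `C Cᴴ = D` iff `C = U D^{1/2}` for some unitary `U` commuting
with `D`. -/
theorem saturating_matrices_characterization {ι : Type*} [Fintype ι] [DecidableEq ι]
    (d : ι → ℝ) (hd : ∀ i, 0 < d i) (C : Matrix ι ι ℂ) :
    (Cᴴ * C = Matrix.diagonal (fun i => (d i : ℂ)) ∧
      C * Cᴴ = Matrix.diagonal (fun i => (d i : ℂ))) ↔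
    (∃ U ∈ Matrix.unitaryGroup ι ℂ,
      U * Matrix.diagonal (fun i => (d i : ℂ)) =
        Matrix.diagonal (fun i => (d i : ℂ)) * U ∧
      C = U * Matrix.diagonal (fun i => (Real.sqrt (d i) : ℂ))) := by
  set D : Matrix ι ι ℂ := Matrix.diagonal (fun i => (d i : ℂ)) with hD
  set Dh : Matrix ι ι ℂ := Matrix.diagonal (fun i => (Real.sqrt (d i) : ℂ)) with hDh
  set Dinv : Matrix ι ι ℂ := Matrix.diagonal (fun i => ((Real.sqrt (d i) : ℂ))⁻¹) with hDinv
  have hsne : ∀ i, ((Real.sqrt (d i) : ℂ)) ≠ 0 := fun i =>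
    Complex.ofReal_ne_zero.2 (Real.sqrt_ne_zero'.2 (hd i))
  have hDh2 : Dh * Dh = D := by
    rw [hDh, hD, Matrix.diagonal_mul_diagonal]
    exact congrArg Matrix.diagonal (funext fun i => by
      rw [← Complex.ofReal_mul, Real.mul_self_sqrt (hd i).le])
  have hDhDinv : Dh * Dinv = 1 := by
    rw [hDh, hDinv, Matrix.diagonal_mul_diagonal]
    rw [show (1 : Matrix ι ι ℂ) = Matrix.diagonal (fun _ => (1:ℂ)) from (Matrix.diagonal_one).symm]
    exact congrArg Matrix.diagonal (funext fun i => mul_inv_cancel₀ (hsne i))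
  have hDinvDh : Dinv * Dh = 1 := by
    rw [hDh, hDinv, Matrix.diagonal_mul_diagonal]
    rw [show (1 : Matrix ι ι ℂ) = Matrix.diagonal (fun _ => (1:ℂ)) from (Matrix.diagonal_one).symm]
    exact congrArg Matrix.diagonal (funext fun i => inv_mul_cancel₀ (hsne i))
  have hDinvD : Dinv * D = Dh := by
    rw [← hDh2, ← mul_assoc, hDinvDh, one_mul]
  have hDDinv : D * Dinv = Dh := by
    rw [← hDh2, mul_assoc, hDhDinv, mul_one]
  have hDhH : Dhᴴ = Dh := by
    rw [hDh, Matrix.diagonal_conjTranspose]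
    exact congrArg Matrix.diagonal (funext fun i => by
      simp [Complex.star_def, Complex.conj_ofReal])
  constructor
  · rintro ⟨h1, h2⟩
    refine ⟨C * Dinv, ?_, ?_, ?_⟩
    · rw [Matrix.mem_unitaryGroup_iff']
      have hDinvH : Dinvᴴ = Dinv := by
        rw [hDinv, Matrix.diagonal_conjTranspose]
        exact congrArg Matrix.diagonal (funext fun i => by
          simp [Complex.star_def, ← Complex.ofReal_inv, Complex.conj_ofReal])
      rw [Matrix.star_eq_conjTranspose, Matrix.conjTranspose_mul, hDinvH]
      calc Dinv * Cᴴ * (C * Dinv) = Dinv * (Cᴴ * C) * Dinv := by noncomm_ring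
        _ = Dinv * D * Dinv := by rw [h1]
        _ = Dh * Dinv := by rw [hDinvD]
        _ = 1 := hDhDinv
    · have hCD : C * D = D * C := by
        conv_lhs => rw [← h1]
        conv_rhs => rw [← h2]
        rw [← mul_assoc]
      calc C * Dinv * D = C * (Dinv * D) := by noncomm_ring
        _ = C * Dh := by rw [hDinvD]
        _ = C * (D * Dinv) := by rw [hDDinv]
        _ = (C * D) * Dinv := by noncomm_ring
        _ = (D * C) * Dinv := by rw [hCD]
        _ = D * (C * Dinv) := by noncomm_ring
    · rw [mul_assoc, hDinvDh, mul_one]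
  · rintro ⟨U, hU, hcomm, rfl⟩
    have hU1 : star U * U = 1 := (Matrix.mem_unitaryGroup_iff'.1 hU)
    have hU2 : U * star U = 1 := (Matrix.mem_unitaryGroup_iff.1 hU)
    constructor
    · rw [Matrix.conjTranspose_mul, hDhH, Matrix.star_eq_conjTranspose] at *
      calc Dh * Uᴴ * (U * Dh) = Dh * (Uᴴ * U) * Dh := by noncomm_ring
        _ = Dh * Dh := by rw [hU1, mul_one]
        _ = D := hDh2
    · rw [Matrix.conjTranspose_mul, hDhH, Matrix.star_eq_conjTranspose] at *
      calc U * Dh * (Dh * Uᴴ) = U * (Dh * Dh) * Uᴴ := by noncomm_ring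
        _ = U * D * Uᴴ := by rw [hDh2]
        _ = D * U * Uᴴ := by rw [hcomm]
        _ = D := by rw [mul_assoc, hU2, mul_one]
end
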